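/- arXiv:2305.13153 — 5 statements merged into one kernel-verified Lean document; each statement's English description precedes it below -/
import Mathlib

section
/- Let d, p be positive integers, let L1, L2 : ℝ^d × ℝ^p → ℝ, let Λ ⊆ ℝ^p, and let α > 0. Assume: (a) L1(ω, λ) ≥ 0 for all (ω, λ); (b) λ* ∈ Λ and u* ∈ ℝ^d is a minimizer of u ↦ L2(u, λ*); (c) λ̂ ∈ Λ, û ∈ ℝ^d is a minimizer of u ↦ L2(u, λ̂), and (ω̂, λ̂) is optimal for the penalized outer problem, i.e. for every λ ∈ Λ, every ω ∈ ℝ^d and every minimizer u_λ of u ↦ L2(u, λ) one has L1(ω̂, λ̂) + α(L2(ω̂, λ̂) − L2(û, λ̂)) ≤ L1(ω, λ) + α(L2(ω, λ) − L2(u_λ, λ)). Then 0 ≤ L2(ω̂, λ̂) − L2(û, λ̂) ≤ L1(u*, λ*)/α. -/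
lemma le_div_of_add_mul_le {a g c α : ℝ} (hα : 0 < α) (ha : 0 ≤ a) (h : a + α * g ≤ c) :
    g ≤ c / α := by
  rw [le_div_iff₀' hα]
  linarith

theorem minimax_penalty_gap_bound_general
    (d p : ℕ)
    (L1 L2 : EuclideanSpace ℝ (Fin d) → EuclideanSpace ℝ (Fin p) → ℝ)
    (Λ : Set (EuclideanSpace ℝ (Fin p)))
    (α : ℝ) (hα : 0 < α)
    (hL1nonneg : ∀ ω lam, 0 ≤ L1 ω lam)
    (lamStar : EuclideanSpace ℝ (Fin p)) (uStar : EuclideanSpace ℝ (Fin d))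
    (hlamStar : lamStar ∈ Λ)
    (huStar : ∀ u, L2 uStar lamStar ≤ L2 u lamStar)
    (lamHat : EuclideanSpace ℝ (Fin p)) (uHat ωHat : EuclideanSpace ℝ (Fin d))
    (huHat : ∀ u, L2 uHat lamHat ≤ L2 u lamHat)
    (hopt : ∀ lam ∈ Λ, ∀ ω : EuclideanSpace ℝ (Fin d),
      ∀ ulam : EuclideanSpace ℝ (Fin d), (∀ u, L2 ulam lam ≤ L2 u lam) →
        L1 ωHat lamHat + α * (L2 ωHat lamHat - L2 uHat lamHat)
          ≤ L1 ω lam + α * (L2 ω lam - L2 ulam lam)) :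
    0 ≤ L2 ωHat lamHat - L2 uHat lamHat ∧
      L2 ωHat lamHat - L2 uHat lamHat ≤ L1 uStar lamStar / α := by
  refine ⟨sub_nonneg.2 (huHat ωHat), ?_⟩
  -- Compare with the bilevel solution `(ω, λ) = (u*, λ*)`, where the penalty term vanishes.
  have hcompare := hopt lamStar hlamStar uStar uStar huStar
  rw [sub_self, mul_zero, add_zero] at hcompare
  exact le_div_of_add_mul_le hα (hL1nonneg ωHat lamHat) hcompare

/-- first claim of the bilevel–minimax equivalence theorem. -/
theorem minimax_penalty_gap_bound
    (d p : ℕ) (hd : 0 < d) (hp : 0 < p)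
    (L1 L2 : EuclideanSpace ℝ (Fin d) → EuclideanSpace ℝ (Fin p) → ℝ)
    (Λ : Set (EuclideanSpace ℝ (Fin p)))
    (α : ℝ) (hα : 0 < α)
    (hL1nonneg : ∀ ω lam, 0 ≤ L1 ω lam)
    (lamStar : EuclideanSpace ℝ (Fin p)) (uStar : EuclideanSpace ℝ (Fin d))
    (hlamStar : lamStar ∈ Λ)
    (huStar : ∀ u, L2 uStar lamStar ≤ L2 u lamStar)
    (lamHat : EuclideanSpace ℝ (Fin p)) (uHat ωHat : EuclideanSpace ℝ (Fin d))
    (hlamHat : lamHat ∈ Λ)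
    (huHat : ∀ u, L2 uHat lamHat ≤ L2 u lamHat)
    (hopt : ∀ lam ∈ Λ, ∀ ω : EuclideanSpace ℝ (Fin d),
      ∀ ulam : EuclideanSpace ℝ (Fin d), (∀ u, L2 ulam lam ≤ L2 u lam) →
        L1 ωHat lamHat + α * (L2 ωHat lamHat - L2 uHat lamHat)
          ≤ L1 ω lam + α * (L2 ω lam - L2 ulam lam)) :
    0 ≤ L2 ωHat lamHat - L2 uHat lamHat ∧
      L2 ωHat lamHat - L2 uHat lamHat ≤ L1 uStar lamStar / α :=
  minimax_penalty_gap_bound_general d p L1 L2 Λ α hα hL1nonneg lamStar uStar hlamStar huStar lamHat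
    uHat ωHat huHat hopt
end

section
/- Let d, p be positive integers, let L1, L2 : ℝ^d × ℝ^p → ℝ, let Λ ⊆ ℝ^p, let α > 0, and let M > 0, r > 0, L̂1 ≥ 0. Assume: (a) L1(ω, λ) ≥ 0 for all (ω, λ); (b) for every λ, the map ω ↦ L1(ω, λ) is L̂1-Lipschitz; (c) for every λ ∈ Λ the function u ↦ L2(u, λ) has a unique minimizer, denoted u*(λ); (d) λ* ∈ Λ minimizes λ ↦ L1(u*(λ), λ) over Λ, and u* = u*(λ*); (e) λ̂ ∈ Λ, û = u*(λ̂), and (ω̂, λ̂) satisfies L1(ω̂, λ̂) + α(L2(ω̂, λ̂) − L2(û, λ̂)) ≤ L1(ω, λ) + α(L2(ω, λ) − L2(u*(λ), λ)) for all ω ∈ ℝ^d, λ ∈ Λ; (f) error-bound condition: ‖ω̂ − û‖^r ≤ M·(L2(ω̂, λ̂) − L2(û, λ̂)). Then L1(u*, λ*) − L̂1 · (M·L1(u*, λ*)/α)^{1/r} ≤ L1(ω̂, λ̂) ≤ L1(u*, λ*). -/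
/-!
Comparing the saddle point `(ω̂, λ̂)` with the feasible point `(u*(λ*), λ*)`, where the penalty
vanishes, bounds the penalty value `L1(ω̂, λ̂) + α·(L2(ω̂, λ̂) - L2(û, λ̂))` by `L1(u*, λ*)`. Both
summands are nonnegative, so this gives the upper bound and also bounds the lower-level gap by
`L1(u*, λ*)/α`. The error bound turns the gap into `‖ω̂ - û‖ ≤ (M·L1(u*, λ*)/α)^(1/r)`, and the
Lipschitz property of `L1` transfers this to `L1(ω̂, λ̂) ≥ L1(û, λ̂) - L̂1·‖ω̂ - û‖`, where
`L1(û, λ̂) ≥ L1(u*, λ*)` by optimality of `λ*`.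
-/

noncomputable section

namespace MinimaxPenalty

variable {X P : Type*}

/-- The penalty function `L^α(u, ω, λ)` of the minimax reformulation. -/
def penalty (L1 L2 : X → P → ℝ) (α : ℝ) (u ω : X) (lam : P) : ℝ :=
  L1 ω lam + α * (L2 ω lam - L2 u lam)

section

variable {L1 L2 : X → P → ℝ} {α : ℝ} {u ω : X} {lam : P}

@[simp]
theorem penalty_self : penalty L1 L2 α u u lam = L1 u lam := by
  simp [penalty]

theorem le_penalty (hα : 0 ≤ α) (hmin : ∀ v, L2 u lam ≤ L2 v lam) :
    L1 ω lam ≤ penalty L1 L2 α u ω lam := by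
  have := mul_nonneg hα (sub_nonneg.2 (hmin ω))
  unfold penalty
  linarith

theorem mul_gap_le_penalty (hL1 : 0 ≤ L1 ω lam) :
    α * (L2 ω lam - L2 u lam) ≤ penalty L1 L2 α u ω lam := by
  unfold penalty
  linarith

theorem penalty_le_value_of_isSaddle {Λ : Set P} {uStar : P → X} {ωHat : X} {lamHat lamStar : P}
    (hopt : ∀ ω, ∀ lam ∈ Λ,
      penalty L1 L2 α (uStar lamHat) ωHat lamHat ≤ penalty L1 L2 α (uStar lam) ω lam)
    (hlamStar : lamStar ∈ Λ) :
    penalty L1 L2 α (uStar lamHat) ωHat lamHat ≤ L1 (uStar lamStar) lamStar := by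
  simpa using hopt (uStar lamStar) lamStar hlamStar

end

theorem le_rpow_of_errorBound {x gap V M α r : ℝ} (hx : 0 ≤ x) (hM : 0 ≤ M) (hα : 0 < α)
    (hr : 0 < r) (hgap : 0 ≤ gap) (herr : x ^ r ≤ M * gap) (hgapV : α * gap ≤ V) :
    x ≤ (M * V / α) ^ (1 / r) := by
  have hgapV' : gap ≤ V / α := (le_div_iff₀' hα).2 hgapV
  have hV : 0 ≤ V / α := hgap.trans hgapV'
  rw [one_div, Real.le_rpow_inv_iff_of_pos hx (by rw [mul_div_assoc]; positivity) hr]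
  calc x ^ r ≤ M * gap := herr
    _ ≤ M * (V / α) := by gcongr
    _ = M * V / α := (mul_div_assoc _ _ _).symm

end MinimaxPenalty

open MinimaxPenalty

theorem minimax_penalty_value_bound_general
    (d p : ℕ)
    (L1 L2 : EuclideanSpace ℝ (Fin d) → EuclideanSpace ℝ (Fin p) → ℝ)
    (Λ : Set (EuclideanSpace ℝ (Fin p)))
    (α M r L1hat : ℝ) (hα : 0 < α) (hM : 0 < M) (hr : 0 < r) (hL1hat : 0 ≤ L1hat)
    (hL1nonneg : ∀ ω lam, 0 ≤ L1 ω lam)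
    (hL1lip : ∀ ω ω' lam, |L1 ω lam - L1 ω' lam| ≤ L1hat * ‖ω - ω'‖)
    (uStarFun : EuclideanSpace ℝ (Fin p) → EuclideanSpace ℝ (Fin d))
    (huStarFun : ∀ lam ∈ Λ, (∀ u, L2 (uStarFun lam) lam ≤ L2 u lam) ∧
      ∀ u, (∀ v, L2 u lam ≤ L2 v lam) → u = uStarFun lam)
    (lamStar : EuclideanSpace ℝ (Fin p)) (hlamStar : lamStar ∈ Λ)
    (hlamStarOpt : ∀ lam ∈ Λ, L1 (uStarFun lamStar) lamStar ≤ L1 (uStarFun lam) lam)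
    (lamHat : EuclideanSpace ℝ (Fin p)) (hlamHat : lamHat ∈ Λ)
    (ωHat : EuclideanSpace ℝ (Fin d))
    (hopt : ∀ ω : EuclideanSpace ℝ (Fin d), ∀ lam ∈ Λ,
      L1 ωHat lamHat + α * (L2 ωHat lamHat - L2 (uStarFun lamHat) lamHat)
        ≤ L1 ω lam + α * (L2 ω lam - L2 (uStarFun lam) lam))
    (herr : ‖ωHat - uStarFun lamHat‖ ^ r
      ≤ M * (L2 ωHat lamHat - L2 (uStarFun lamHat) lamHat)) :
    L1 (uStarFun lamStar) lamStar -
        L1hat * (M * L1 (uStarFun lamStar) lamStar / α) ^ (1 / r)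
      ≤ L1 ωHat lamHat ∧ L1 ωHat lamHat ≤ L1 (uStarFun lamStar) lamStar := by
  have hmin := (huStarFun lamHat hlamHat).1
  have hval := penalty_le_value_of_isSaddle (L1 := L1) (L2 := L2) (α := α) hopt hlamStar
  have hnorm : ‖ωHat - uStarFun lamHat‖ ≤ (M * L1 (uStarFun lamStar) lamStar / α) ^ (1 / r) :=
    le_rpow_of_errorBound (norm_nonneg _) hM.le hα hr (sub_nonneg.2 (hmin ωHat)) herr
      ((mul_gap_le_penalty (hL1nonneg ωHat lamHat)).trans hval)
  have hlip := (abs_sub_le_iff.1 (hL1lip (uStarFun lamHat) ωHat lamHat)).1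
  rw [norm_sub_rev] at hlip
  refine ⟨?_, (le_penalty hα.le hmin).trans hval⟩
  calc L1 (uStarFun lamStar) lamStar - L1hat * (M * L1 (uStarFun lamStar) lamStar / α) ^ (1 / r)
      ≤ L1 (uStarFun lamHat) lamHat - L1hat * ‖ωHat - uStarFun lamHat‖ := by
        gcongr
        exact hlamStarOpt lamHat hlamHat
    _ ≤ L1 ωHat lamHat := by linarith

/-- second claim of the bilevel–minimax equivalence theorem. -/
theorem minimax_penalty_value_bound
    (d p : ℕ) (hd : 0 < d) (hp : 0 < p)
    (L1 L2 : EuclideanSpace ℝ (Fin d) → EuclideanSpace ℝ (Fin p) → ℝ)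
    (Λ : Set (EuclideanSpace ℝ (Fin p)))
    (α M r L1hat : ℝ) (hα : 0 < α) (hM : 0 < M) (hr : 0 < r) (hL1hat : 0 ≤ L1hat)
    (hL1nonneg : ∀ ω lam, 0 ≤ L1 ω lam)
    (hL1lip : ∀ ω ω' lam, |L1 ω lam - L1 ω' lam| ≤ L1hat * ‖ω - ω'‖)
    (uStarFun : EuclideanSpace ℝ (Fin p) → EuclideanSpace ℝ (Fin d))
    (huStarFun : ∀ lam ∈ Λ, (∀ u, L2 (uStarFun lam) lam ≤ L2 u lam) ∧
      ∀ u, (∀ v, L2 u lam ≤ L2 v lam) → u = uStarFun lam)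
    (lamStar : EuclideanSpace ℝ (Fin p)) (hlamStar : lamStar ∈ Λ)
    (hlamStarOpt : ∀ lam ∈ Λ, L1 (uStarFun lamStar) lamStar ≤ L1 (uStarFun lam) lam)
    (lamHat : EuclideanSpace ℝ (Fin p)) (hlamHat : lamHat ∈ Λ)
    (ωHat : EuclideanSpace ℝ (Fin d))
    (hopt : ∀ ω : EuclideanSpace ℝ (Fin d), ∀ lam ∈ Λ,
      L1 ωHat lamHat + α * (L2 ωHat lamHat - L2 (uStarFun lamHat) lamHat)
        ≤ L1 ω lam + α * (L2 ω lam - L2 (uStarFun lam) lam))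
    (herr : ‖ωHat - uStarFun lamHat‖ ^ r
      ≤ M * (L2 ωHat lamHat - L2 (uStarFun lamHat) lamHat)) :
    L1 (uStarFun lamStar) lamStar -
        L1hat * (M * L1 (uStarFun lamStar) lamStar / α) ^ (1 / r)
      ≤ L1 ωHat lamHat ∧ L1 ωHat lamHat ≤ L1 (uStarFun lamStar) lamStar :=
  minimax_penalty_value_bound_general d p L1 L2 Λ α M r L1hat hα hM hr hL1hat hL1nonneg hL1lip
    uStarFun huStarFun lamStar hlamStar hlamStarOpt lamHat hlamHat ωHat hopt herr

end
end

section
/- Let d be a positive integer, ℓ10 ≥ 0, μ2 > 0, α > 0. Let f, g : ℝ^d → ℝ be differentiable, with ‖∇f(x)‖ ≤ ℓ10 for all x (e.g. f is ℓ10-Lipschitz) and g μ2-strongly convex. Let ω* be a minimizer of g (so ∇g(ω*) = 0), and let ω_α be a stationary point of f + α·g, i.e. ∇f(ω_α) + α∇g(ω_α) = 0. Then ‖ω_α − ω*‖ ≤ ℓ10/(μ2·α). -/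
noncomputable section

open scoped RealInnerProductSpace

/-!
The gradient of a `μ`-strongly convex function is strongly monotone, hence, by Cauchy–Schwarz,
`μ ‖x - y‖ ≤ ‖∇g x - ∇g y‖`. At the minimizer `ω*` we have `∇g ω* = 0`, while stationarity of
`f + α g` at `ω_α` gives `α ‖∇g ω_α‖ = ‖∇f ω_α‖ ≤ ℓ`. Hence `μ α ‖ω_α - ω*‖ ≤ ℓ`.
-/

section StronglyConvex

variable {E : Type*} [NormedAddCommGroup E] [InnerProductSpace ℝ E] [CompleteSpace E]
  {g : E → ℝ} {μ : ℝ}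

theorem IsLocalMin.gradient_eq_zero {x : E} (h : IsLocalMin g x) : gradient g x = 0 := by
  simp [gradient, h.fderiv_eq_zero]

theorem mul_norm_sq_le_inner_gradient_sub
    (hsc : ∀ x y, g x ≥ g y + ⟪gradient g y, x - y⟫ + μ / 2 * ‖x - y‖ ^ 2) (x y : E) :
    μ * ‖x - y‖ ^ 2 ≤ ⟪gradient g x - gradient g y, x - y⟫ := by
  have hxy := hsc x y
  have hyx := hsc y x
  rw [← neg_sub x y, inner_neg_right, norm_neg] at hyx
  rw [inner_sub_left]
  linarith

theorem mul_norm_sub_le_norm_gradient_sub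
    (hsc : ∀ x y, g x ≥ g y + ⟪gradient g y, x - y⟫ + μ / 2 * ‖x - y‖ ^ 2) (x y : E) :
    μ * ‖x - y‖ ≤ ‖gradient g x - gradient g y‖ := by
  rcases (norm_nonneg (x - y)).eq_or_lt with hzero | hpos
  · rw [← hzero, mul_zero]
    exact norm_nonneg _
  refine le_of_mul_le_mul_right ?_ hpos
  calc μ * ‖x - y‖ * ‖x - y‖ = μ * ‖x - y‖ ^ 2 := by ring
    _ ≤ ⟪gradient g x - gradient g y, x - y⟫ := mul_norm_sq_le_inner_gradient_sub hsc x y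
    _ ≤ ‖gradient g x - gradient g y‖ * ‖x - y‖ := real_inner_le_norm _ _

end StronglyConvex

theorem penalized_minimizer_close_general
    (d : ℕ) (ℓ10 μ2 α : ℝ)
    (hμ2 : 0 < μ2) (hα : 0 < α)
    (f g : EuclideanSpace ℝ (Fin d) → ℝ)
    (hgradf : ∀ x, ‖gradient f x‖ ≤ ℓ10)
    (hsc : ∀ x y, g x ≥ g y + ⟪gradient g y, x - y⟫ + μ2 / 2 * ‖x - y‖ ^ 2)
    (ωstar ωα : EuclideanSpace ℝ (Fin d))
    (hωstar : ∀ x, g ωstar ≤ g x)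
    (hωα : gradient f ωα + α • gradient g ωα = 0) :
    ‖ωα - ωstar‖ ≤ ℓ10 / (μ2 * α) := by
  have hgrad_star : gradient g ωstar = 0 :=
    IsLocalMin.gradient_eq_zero (Filter.Eventually.of_forall hωstar)
  have hdist : μ2 * ‖ωα - ωstar‖ ≤ ‖gradient g ωα‖ := by
    simpa [hgrad_star] using mul_norm_sub_le_norm_gradient_sub hsc ωα ωstar
  have hgrad_α : α * ‖gradient g ωα‖ = ‖gradient f ωα‖ := by
    rw [← Real.norm_of_nonneg hα.le, ← norm_smul, eq_neg_of_add_eq_zero_right hωα, norm_neg]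
  rw [le_div_iff₀ (mul_pos hμ2 hα)]
  calc ‖ωα - ωstar‖ * (μ2 * α) = α * (μ2 * ‖ωα - ωstar‖) := by ring
    _ ≤ α * ‖gradient g ωα‖ := mul_le_mul_of_nonneg_left hdist hα.le
    _ ≤ ℓ10 := hgrad_α ▸ hgradf ωα

/-- distance between the penalized stationary point and the exact
minimizer of the strongly convex inner objective. -/
theorem penalized_minimizer_close
    (d : ℕ) (hd : 0 < d) (ℓ10 μ2 α : ℝ)
    (hℓ10 : 0 ≤ ℓ10) (hμ2 : 0 < μ2) (hα : 0 < α)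
    (f g : EuclideanSpace ℝ (Fin d) → ℝ)
    (hf : Differentiable ℝ f) (hg : Differentiable ℝ g)
    (hgradf : ∀ x, ‖gradient f x‖ ≤ ℓ10)
    (hsc : ∀ x y, g x ≥ g y + ⟪gradient g y, x - y⟫ + μ2 / 2 * ‖x - y‖ ^ 2)
    (ωstar ωα : EuclideanSpace ℝ (Fin d))
    (hωstar : ∀ x, g ωstar ≤ g x)
    (hωα : gradient f ωα + α • gradient g ωα = 0) :
    ‖ωα - ωstar‖ ≤ ℓ10 / (μ2 * α) :=
  penalized_minimizer_close_general d ℓ10 μ2 α hμ2 hα f g hgradf hsc ωstar ωα hωstar hωα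

end
end

section
/- Let L1, L2 : ℝ^d × ℝ^p → ℝ, α > 0, ℓ10 ≥ 0, ℓ21 ≥ 0, μ2 > 0. Suppose for every λ ∈ ℝ^p: (a) ω ↦ L1(ω, λ) is ℓ10-Lipschitz; (b) ω ↦ L2(ω, λ) is differentiable, μ2-strongly convex, and its gradient is ℓ21-Lipschitz; (c) u*(λ) is the minimizer of ω ↦ L2(ω, λ); (d) ω*_α(λ) minimizes ω ↦ L1(ω, λ) + αL2(ω, λ) and satisfies ∇_ω L1(ω*_α(λ), λ) + α∇_ω L2(ω*_α(λ), λ) = 0. Define the bilevel value function 𝓛(λ) = L1(u*(λ), λ) and the penalized value function Γ^α(λ) = L1(ω*_α(λ), λ) + α(L2(ω*_α(λ), λ) − L2(u*(λ), λ)). Then for every λ, |𝓛(λ) − Γ^α(λ)| ≤ (ℓ10²/(μ2·α))·(1 + ℓ21/(2μ2)). -/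
/-!
Compare both value functions through `w = ω*_α(λ)` and `u = u*(λ)`. Minimality of `w` for
`L1 + α L2` gives `Γ^α(λ) ≤ 𝓛(λ)`. Conversely, `u` is a critical point of the strongly convex
`L2(·, λ)`, so `L2(w, λ) - L2(u, λ) ≥ (μ2/2) r²` with `r = ‖w - u‖`, while
`L1(u, λ) - L1(w, λ) ≤ ℓ10 r`; hence `𝓛(λ) - Γ^α(λ) ≤ ℓ10 r - α (μ2/2) r² ≤ ℓ10² / (2 μ2 α)`,
which is at most the stated bound since `1 + ℓ21 / (2 μ2) ≥ 1/2`.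
-/

open scoped RealInnerProductSpace

theorem IsLocalMin.gradient_eq_zero_s5 {F : Type*} [NormedAddCommGroup F] [InnerProductSpace ℝ F]
    [CompleteSpace F] {f : F → ℝ} {a : F} (h : IsLocalMin f a) : gradient f a = 0 := by
  simp [gradient, h.fderiv_eq_zero]

section QuadraticGrowth

variable {F : Type*} [NormedAddCommGroup F] [InnerProductSpace ℝ F] [CompleteSpace F]

theorem quadratic_growth_of_isMinOn {g : F → ℝ} {u : F} {μ : ℝ} (hu : IsMinOn g Set.univ u)
    (hsc : ∀ x, g u + ⟪gradient g u, x - u⟫ + μ / 2 * ‖x - u‖ ^ 2 ≤ g x) (x : F) :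
    g u + μ / 2 * ‖x - u‖ ^ 2 ≤ g x := by
  have hcrit : gradient g u = 0 := (hu.isLocalMin Filter.univ_mem).gradient_eq_zero_s5
  simpa [hcrit] using hsc x

end QuadraticGrowth

theorem mul_sub_mul_sq_le_sq_div (a b r : ℝ) (ha : 0 < a) : b * r - a * r ^ 2 ≤ b ^ 2 / (4 * a) := by
  rw [le_div_iff₀ (by positivity)]
  nlinarith [sq_nonneg (b - 2 * a * r)]

section PenaltyGap

variable {E : Type*} {f g : E → ℝ} {u w : E} {α ℓ μ : ℝ}

theorem penalty_gap_nonneg (hw : ∀ x, f w + α * g w ≤ f x + α * g x) :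
    0 ≤ f u - (f w + α * (g w - g u)) := by
  linarith [hw u]

theorem penalty_gap_le [SeminormedAddCommGroup E] (hα : 0 < α) (hμ : 0 < μ)
    (hf : ∀ x y, |f x - f y| ≤ ℓ * ‖x - y‖) (hg : ∀ x, g u + μ / 2 * ‖x - u‖ ^ 2 ≤ g x) :
    f u - (f w + α * (g w - g u)) ≤ ℓ ^ 2 / (2 * μ * α) := by
  have hlip : f u - f w ≤ ℓ * ‖w - u‖ :=
    (le_abs_self _).trans ((hf u w).trans_eq (by rw [norm_sub_rev]))
  have hgrowth : α * (μ / 2 * ‖w - u‖ ^ 2) ≤ α * (g w - g u) :=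
    mul_le_mul_of_nonneg_left (by linarith [hg w]) hα.le
  have hsquare := mul_sub_mul_sq_le_sq_div (α * (μ / 2)) ℓ ‖w - u‖ (by positivity)
  calc f u - (f w + α * (g w - g u))
      ≤ ℓ * ‖w - u‖ - α * (μ / 2) * ‖w - u‖ ^ 2 := by linarith
    _ ≤ ℓ ^ 2 / (4 * (α * (μ / 2))) := hsquare
    _ = ℓ ^ 2 / (2 * μ * α) := by ring_nf

end PenaltyGap

theorem value_function_gap_general
    (d p : ℕ)
    (L1 L2 : EuclideanSpace ℝ (Fin d) → EuclideanSpace ℝ (Fin p) → ℝ)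
    (α ℓ10 ℓ21 μ2 : ℝ)
    (hα : 0 < α) (hℓ21 : 0 ≤ ℓ21) (hμ2 : 0 < μ2)
    (hL1lip : ∀ lam ω ω', |L1 ω lam - L1 ω' lam| ≤ ℓ10 * ‖ω - ω'‖)
    (hL2sc : ∀ lam x y, L2 x lam ≥ L2 y lam +
      ⟪gradient (fun ω => L2 ω lam) y, x - y⟫ + μ2 / 2 * ‖x - y‖ ^ 2)
    (uStar ωα : EuclideanSpace ℝ (Fin p) → EuclideanSpace ℝ (Fin d))
    (huStar : ∀ lam u, L2 (uStar lam) lam ≤ L2 u lam)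
    (hωαmin : ∀ lam ω, L1 (ωα lam) lam + α * L2 (ωα lam) lam ≤ L1 ω lam + α * L2 ω lam) :
    ∀ lam, |L1 (uStar lam) lam -
        (L1 (ωα lam) lam + α * (L2 (ωα lam) lam - L2 (uStar lam) lam))|
      ≤ ℓ10 ^ 2 / (μ2 * α) * (1 + ℓ21 / (2 * μ2)) := by
  intro lam
  have hgrowth := quadratic_growth_of_isMinOn (g := fun ω => L2 ω lam)
    (fun x _ => huStar lam x) (fun x => hL2sc lam x (uStar lam))
  have hlower := penalty_gap_nonneg (f := fun ω => L1 ω lam) (g := fun ω => L2 ω lam)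
    (u := uStar lam) (hωαmin lam)
  have hupper := penalty_gap_le (f := fun ω => L1 ω lam) (g := fun ω => L2 ω lam)
    (w := ωα lam) hα hμ2 (hL1lip lam) hgrowth
  have hconst : ℓ10 ^ 2 / (2 * μ2 * α) ≤ ℓ10 ^ 2 / (μ2 * α) * (1 + ℓ21 / (2 * μ2)) := by
    rw [show ℓ10 ^ 2 / (2 * μ2 * α) = ℓ10 ^ 2 / (μ2 * α) * (1 / 2) by field_simp]
    gcongr
    linarith [div_nonneg hℓ21 (by positivity : (0 : ℝ) ≤ 2 * μ2)]
  rw [abs_le]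
  constructor <;> linarith [div_nonneg (sq_nonneg ℓ10) (mul_pos hμ2 hα).le]

/-- value gap between the bilevel value function and the
penalized value function, `|𝓛(λ) − Γ^α(λ)| ≤ (ℓ10²/(μ2 α))(1 + ℓ21/(2 μ2))`. -/
theorem value_function_gap
    (d p : ℕ) (hd : 0 < d) (hp : 0 < p)
    (L1 L2 : EuclideanSpace ℝ (Fin d) → EuclideanSpace ℝ (Fin p) → ℝ)
    (α ℓ10 ℓ21 μ2 : ℝ)
    (hα : 0 < α) (hℓ10 : 0 ≤ ℓ10) (hℓ21 : 0 ≤ ℓ21) (hμ2 : 0 < μ2)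
    (hL1lip : ∀ lam ω ω', |L1 ω lam - L1 ω' lam| ≤ ℓ10 * ‖ω - ω'‖)
    (hL2diff : ∀ lam, Differentiable ℝ fun ω => L2 ω lam)
    (hL2sc : ∀ lam x y, L2 x lam ≥ L2 y lam +
      ⟪gradient (fun ω => L2 ω lam) y, x - y⟫ + μ2 / 2 * ‖x - y‖ ^ 2)
    (hL2grad : ∀ lam x y,
      ‖gradient (fun ω => L2 ω lam) x - gradient (fun ω => L2 ω lam) y‖ ≤ ℓ21 * ‖x - y‖)
    (uStar ωα : EuclideanSpace ℝ (Fin p) → EuclideanSpace ℝ (Fin d))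
    (huStar : ∀ lam u, L2 (uStar lam) lam ≤ L2 u lam)
    (hωαmin : ∀ lam ω, L1 (ωα lam) lam + α * L2 (ωα lam) lam ≤ L1 ω lam + α * L2 ω lam)
    (hωαstat : ∀ lam, gradient (fun ω => L1 ω lam + α * L2 ω lam) (ωα lam) = 0) :
    ∀ lam, |L1 (uStar lam) lam -
        (L1 (ωα lam) lam + α * (L2 (ωα lam) lam - L2 (uStar lam) lam))|
      ≤ ℓ10 ^ 2 / (μ2 * α) * (1 + ℓ21 / (2 * μ2)) :=
  value_function_gap_general d p L1 L2 α ℓ10 ℓ21 μ2 hα hℓ21 hμ2 hL1lip hL2sc uStar ωα huStar hωαmin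
end

section
/- Let d be a positive integer, ℓ10 ≥ 0, μ2 > 0, and 0 < a ≤ b. Let f, g : ℝ^d → ℝ be differentiable with ‖∇f(x)‖ ≤ ℓ10 for all x and g μ2-strongly convex. Let ω_a, ω_b ∈ ℝ^d be stationary points of f + a·g and f + b·g respectively, i.e. ∇f(ω_a) + a∇g(ω_a) = 0 and ∇f(ω_b) + b∇g(ω_b) = 0. Then ‖ω_a − ω_b‖ ≤ 2ℓ10/(μ2·a). -/
/-!
Strong convexity of `g` makes `∇g` strongly monotone, so `μ₂ ‖ωa - ωb‖² ≤ ⟪∇g ωa - ∇g ωb, ωa - ωb⟫`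
and hence `μ₂ ‖ωa - ωb‖ ≤ ‖∇g ωa - ∇g ωb‖`. Stationarity gives `∇g ω = -(penalty)⁻¹ • ∇f ω` at
both points, and the bound on `∇f` together with `b⁻¹ ≤ a⁻¹` bounds that difference by `2 ℓ₁₀ / a`.
-/

noncomputable section

open scoped RealInnerProductSpace

section StrongMonotonicity

variable {E : Type*} [NormedAddCommGroup E] [InnerProductSpace ℝ E]

theorem mul_norm_sub_sq_le_inner_sub_of_strongConvex {g : E → ℝ} {G : E → E} {μ : ℝ}
    (hsc : ∀ x y, g x ≥ g y + ⟪G y, x - y⟫ + μ / 2 * ‖x - y‖ ^ 2) (x y : E) :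
    μ * ‖x - y‖ ^ 2 ≤ ⟪G x - G y, x - y⟫ := by
  have hxy := hsc x y
  have hyx := hsc y x
  rw [norm_sub_rev y x, ← neg_sub x y, inner_neg_right] at hyx
  rw [inner_sub_left]
  linarith

theorem norm_sub_le_div_of_strongMonotone {G : E → E} {μ C : ℝ} (hμ : 0 < μ) {x y : E}
    (hmono : μ * ‖x - y‖ ^ 2 ≤ ⟪G x - G y, x - y⟫) (hG : ‖G x - G y‖ ≤ C) :
    ‖x - y‖ ≤ C / μ := by
  rw [le_div_iff₀ hμ]
  rcases (norm_nonneg (x - y)).eq_or_lt with hzero | hpos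
  · rw [← hzero, zero_mul]
    exact (norm_nonneg _).trans hG
  · refine le_of_mul_le_mul_right ?_ hpos
    calc ‖x - y‖ * μ * ‖x - y‖ = μ * ‖x - y‖ ^ 2 := by ring
      _ ≤ ⟪G x - G y, x - y⟫ := hmono
      _ ≤ ‖G x - G y‖ * ‖x - y‖ := real_inner_le_norm _ _
      _ ≤ C * ‖x - y‖ := by gcongr

end StrongMonotonicity

theorem eq_neg_inv_smul_of_add_smul_eq_zero {K V : Type*} [Field K] [AddCommGroup V] [Module K V]
    {v w : V} {a : K} (ha : a ≠ 0) (h : v + a • w = 0) : w = -(a⁻¹ • v) := by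
  apply eq_neg_of_add_eq_zero_left
  have := congrArg (a⁻¹ • ·) h
  simpa only [smul_add, smul_smul, inv_mul_cancel₀ ha, one_smul, smul_zero, add_comm] using this

theorem norm_inv_smul_sub_inv_smul_le {E : Type*} [SeminormedAddCommGroup E] [NormedSpace ℝ E]
    {v w : E} {a b ℓ : ℝ} (ha : 0 < a) (hab : a ≤ b) (hv : ‖v‖ ≤ ℓ) (hw : ‖w‖ ≤ ℓ) :
    ‖b⁻¹ • v - a⁻¹ • w‖ ≤ 2 * ℓ / a := by
  have hℓ : 0 ≤ ℓ := (norm_nonneg v).trans hv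
  have hb : 0 < b := ha.trans_le hab
  calc ‖b⁻¹ • v - a⁻¹ • w‖ ≤ b⁻¹ * ‖v‖ + a⁻¹ * ‖w‖ := by
        refine (norm_sub_le _ _).trans_eq ?_
        rw [norm_smul, norm_smul, Real.norm_of_nonneg (inv_pos.2 hb).le,
          Real.norm_of_nonneg (inv_pos.2 ha).le]
    _ ≤ a⁻¹ * ℓ + a⁻¹ * ℓ := by gcongr
    _ = 2 * ℓ / a := by ring

theorem penalized_minimizer_drift_general
    (d : ℕ) (ℓ10 μ2 a b : ℝ)
    (hμ2 : 0 < μ2) (ha : 0 < a) (hab : a ≤ b)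
    (f g : EuclideanSpace ℝ (Fin d) → ℝ)
    (hgradf : ∀ x, ‖gradient f x‖ ≤ ℓ10)
    (hsc : ∀ x y, g x ≥ g y + ⟪gradient g y, x - y⟫ + μ2 / 2 * ‖x - y‖ ^ 2)
    (ωa ωb : EuclideanSpace ℝ (Fin d))
    (hωa : gradient f ωa + a • gradient g ωa = 0)
    (hωb : gradient f ωb + b • gradient g ωb = 0) :
    ‖ωa - ωb‖ ≤ 2 * ℓ10 / (μ2 * a) := by
  have hga := eq_neg_inv_smul_of_add_smul_eq_zero ha.ne' hωa
  have hgb := eq_neg_inv_smul_of_add_smul_eq_zero (ha.trans_le hab).ne' hωb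
  have hdiff : ‖gradient g ωa - gradient g ωb‖ ≤ 2 * ℓ10 / a := by
    rw [hga, hgb, neg_sub_neg]
    exact norm_inv_smul_sub_inv_smul_le ha hab (hgradf ωb) (hgradf ωa)
  calc ‖ωa - ωb‖ ≤ 2 * ℓ10 / a / μ2 := norm_sub_le_div_of_strongMonotone hμ2
        (mul_norm_sub_sq_le_inner_sub_of_strongConvex hsc ωa ωb) hdiff
    _ = 2 * ℓ10 / (μ2 * a) := by rw [div_div, mul_comm a]

/-- drift bound between penalized stationary points at two
successive penalty values. -/
theorem penalized_minimizer_drift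
    (d : ℕ) (hd : 0 < d) (ℓ10 μ2 a b : ℝ)
    (hℓ10 : 0 ≤ ℓ10) (hμ2 : 0 < μ2) (ha : 0 < a) (hab : a ≤ b)
    (f g : EuclideanSpace ℝ (Fin d) → ℝ)
    (hf : Differentiable ℝ f) (hg : Differentiable ℝ g)
    (hgradf : ∀ x, ‖gradient f x‖ ≤ ℓ10)
    (hsc : ∀ x y, g x ≥ g y + ⟪gradient g y, x - y⟫ + μ2 / 2 * ‖x - y‖ ^ 2)
    (ωa ωb : EuclideanSpace ℝ (Fin d))
    (hωa : gradient f ωa + a • gradient g ωa = 0)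
    (hωb : gradient f ωb + b • gradient g ωb = 0) :
    ‖ωa - ωb‖ ≤ 2 * ℓ10 / (μ2 * a) :=
  penalized_minimizer_drift_general d ℓ10 μ2 a b hμ2 ha hab f g hgradf hsc ωa ωb hωa hωb

end
end
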